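/- arXiv:1710.00966 — 3 statements merged into one kernel-verified Lean document; each statement's English description precedes it below -/
import Mathlib

section
/- Let M be an invertible Hermitian indefinite matrix with τ₊ the smallest positive eigenvalue and τ₋ the largest negative eigenvalue of M. The matrix M̃ = (1-λ)M + λM² is positive definite if and only if λ > 0 and the second root (λ-1)/λ of p_λ(x) = λx² + (1-λ)x lies in the open interval (τ₋, τ₊). -/
/-!
`M̃ = (1-λ)M + λM²` is `p_λ(M)` for `p_λ(x) = (1-λ)x + λx²`, so by the spectral theorem it is
positive definite iff `p_λ` is positive at every eigenvalue of `M`. For `λ > 0`,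
`p_λ(x) = λ x (x - r)` with `r = (λ-1)/λ`, which is positive at `x > 0` iff `r < x` and at `x < 0`
iff `x < r`; since every eigenvalue is nonzero, this holds at all of them iff `τ₋ < r < τ₊`.
Positivity at the negative eigenvalue `τ₋` alone already forces `λ > 0`.
-/

open Matrix
open scoped ComplexOrder

namespace Matrix.IsHermitian

variable {𝕜 n : Type*} [RCLike 𝕜] [Fintype n] [DecidableEq n] {A : Matrix n n 𝕜}

theorem posDef_cfc_iff (hA : A.IsHermitian) (f : ℝ → ℝ) :
    (cfc f A).PosDef ↔ ∀ i, 0 < f (hA.eigenvalues i) := by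
  rw [hA.cfc_eq, IsHermitian.cfc, Unitary.conjStarAlgAut_apply,
    IsUnit.posDef_star_right_conjugate_iff (Unitary.isUnit_coe ..), posDef_diagonal_iff]
  simp only [Function.comp_apply, RCLike.ofReal_pos]

theorem eigenvalues_ne_zero_of_isUnit (hA : A.IsHermitian) (hU : IsUnit A) (i : n) :
    hA.eigenvalues i ≠ 0 := fun h =>
  (spectrum.zero_notMem_iff ℝ).2 hU (h ▸ hA.eigenvalues_mem_spectrum_real i)

theorem smul_add_smul_mul_self_eq_cfc {A : Matrix n n ℂ} (hA : A.IsHermitian) (a b : ℝ) :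
    (a : ℂ) • A + (b : ℂ) • (A * A) = cfc (fun x => a * x + b * (x * x)) A := by
  rw [cfc_add .., cfc_const_mul .., cfc_const_mul .., cfc_mul .., cfc_id' ℝ A,
    Complex.coe_smul, Complex.coe_smul]

end Matrix.IsHermitian

section SecondRoot

variable {lam x : ℝ}

theorem one_sub_mul_add_mul_mul_self_eq (hlam : lam ≠ 0) (x : ℝ) :
    (1 - lam) * x + lam * (x * x) = lam * x * (x - (lam - 1) / lam) := by
  field_simp
  ring

theorem one_sub_mul_add_mul_mul_self_pos_iff_of_pos (hlam : 0 < lam) (hx : 0 < x) :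
    0 < (1 - lam) * x + lam * (x * x) ↔ (lam - 1) / lam < x := by
  rw [one_sub_mul_add_mul_mul_self_eq hlam.ne', mul_pos_iff_of_pos_left (mul_pos hlam hx), sub_pos]

theorem one_sub_mul_add_mul_mul_self_pos_iff_of_neg (hlam : 0 < lam) (hx : x < 0) :
    0 < (1 - lam) * x + lam * (x * x) ↔ x < (lam - 1) / lam := by
  rw [one_sub_mul_add_mul_mul_self_eq hlam.ne', ← neg_mul_neg,
    mul_pos_iff_of_pos_left (neg_pos.2 (mul_neg_of_pos_of_neg hlam hx)), neg_sub, sub_pos]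

theorem pos_of_one_sub_mul_add_mul_mul_self_pos (hx : x < 0)
    (hpos : 0 < (1 - lam) * x + lam * (x * x)) : 0 < lam := by
  nlinarith

end SecondRoot

/-- For an invertible Hermitian indefinite `M`, `M̃ = (1-λ)M + λM²` is positive
definite iff `λ > 0` and the second root `(λ-1)/λ` of `p_λ` lies in `(τ₋, τ₊)`. -/
theorem bdmc_stmt1 (n : ℕ) (M : Matrix (Fin n) (Fin n) ℂ) (hM : M.IsHermitian)
    (hinv : IsUnit M) (τp τm : ℝ) (hτp : 0 < τp) (hτm : τm < 0)
    (hmemp : ∃ i, hM.eigenvalues i = τp)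
    (hminp : ∀ i, 0 < hM.eigenvalues i → τp ≤ hM.eigenvalues i)
    (hmemm : ∃ i, hM.eigenvalues i = τm)
    (hmaxm : ∀ i, hM.eigenvalues i < 0 → hM.eigenvalues i ≤ τm)
    (lam : ℝ) :
    (((1 - lam : ℝ) : ℂ) • M + (lam : ℂ) • (M * M)).PosDef ↔
      (0 < lam ∧ τm < (lam - 1) / lam ∧ (lam - 1) / lam < τp) := by
  rw [hM.smul_add_smul_mul_self_eq_cfc, hM.posDef_cfc_iff]
  obtain ⟨ip, rfl⟩ := hmemp
  obtain ⟨im, rfl⟩ := hmemm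
  constructor
  · intro h
    have hlam := pos_of_one_sub_mul_add_mul_mul_self_pos hτm (h im)
    exact ⟨hlam, (one_sub_mul_add_mul_mul_self_pos_iff_of_neg hlam hτm).1 (h im),
      (one_sub_mul_add_mul_mul_self_pos_iff_of_pos hlam hτp).1 (h ip)⟩
  · rintro ⟨hlam, hm, hp⟩ i
    rcases (hM.eigenvalues_ne_zero_of_isUnit hinv i).lt_or_gt with hneg | hpos
    · exact (one_sub_mul_add_mul_mul_self_pos_iff_of_neg hlam hneg).2
        ((hmaxm i hneg).trans_lt hm)
    · exact (one_sub_mul_add_mul_mul_self_pos_iff_of_pos hlam hpos).2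
        (hp.trans_le (hminp i hpos))
end

section
/- Let a_k = β/(γ+k) with β > 1/c and γ > 0, and suppose the nonnegative real sequence (x_k) satisfies x_{k+1} ≤ (1 - c·a_k)x_k + (D/2)a_k² for all k ≥ 1, where c > 0, D ≥ 0, and c·a_k ≤ 1 for all k. Then x_k ≤ x_1 (γ+1)^{βc}/(γ+k)^{βc} + β²D/((γ+k)(βc-1)) for all k ≥ 1. -/
/-!
With `p = βc > 1` and `t = γ + k`, the recursion reads `x_{k+1} ≤ (1 - p/t) x_k + E/(2t²)` with
`E = β²D`, and the claimed bound `x_1 (γ+1)^p / t^p + E/(t(p-1))` propagates through it term by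
term: Bernoulli's inequality gives `1 - p/t ≤ (t/(t+1))^p`, which carries the first term from `t`
to `t + 1`, and the second term absorbs the noise because the difference it leaves is
`E((p-1)t + p + 1) / (2(p-1)t²(t+1)) ≥ 0`.
-/

open Real

lemma one_sub_div_le_rpow_div_add_one {t p : ℝ} (ht : 0 < t) (hp : 1 ≤ p) :
    1 - p / t ≤ (t / (t + 1)) ^ p := by
  have hs : (-1 : ℝ) ≤ -(1 / (t + 1)) := by
    rw [neg_le_neg_iff, div_le_one (by linarith)]
    linarith
  have hbernoulli := one_add_mul_self_le_rpow_one_add hs hp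
  have hbase : (1 : ℝ) + -(1 / (t + 1)) = t / (t + 1) := by field_simp; ring
  have hshift : p / (t + 1) ≤ p / t := div_le_div_of_nonneg_left (by linarith) ht (by linarith)
  calc 1 - p / t ≤ 1 + p * -(1 / (t + 1)) := by linarith [mul_one_div p (t + 1)]
    _ ≤ (t / (t + 1)) ^ p := hbase ▸ hbernoulli

lemma one_sub_div_mul_div_rpow_le {t p C : ℝ} (ht : 0 < t) (hp : 1 ≤ p) (hC : 0 ≤ C) :
    (1 - p / t) * (C / t ^ p) ≤ C / (t + 1) ^ p := by
  have htp : 0 < t ^ p := rpow_pos_of_pos ht p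
  calc (1 - p / t) * (C / t ^ p) ≤ (t / (t + 1)) ^ p * (C / t ^ p) :=
        mul_le_mul_of_nonneg_right (one_sub_div_le_rpow_div_add_one ht hp) (by positivity)
    _ = C / (t + 1) ^ p := by
        rw [div_rpow ht.le (by linarith)]
        field_simp

lemma one_sub_div_mul_div_add_le {t p E : ℝ} (ht : 0 < t) (hp : 1 < p) (hE : 0 ≤ E) :
    (1 - p / t) * (E / (t * (p - 1))) + E / (2 * t ^ 2) ≤ E / ((t + 1) * (p - 1)) := by
  have hp1 : 0 < p - 1 := by linarith
  have hgap : E / ((t + 1) * (p - 1)) - ((1 - p / t) * (E / (t * (p - 1))) + E / (2 * t ^ 2))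
      = E * ((p - 1) * t + p + 1) / (2 * (p - 1) * t ^ 2 * (t + 1)) := by
    field_simp
    ring
  have hnum : 0 ≤ (p - 1) * t + p + 1 := by nlinarith
  have : 0 ≤ E * ((p - 1) * t + p + 1) / (2 * (p - 1) * t ^ 2 * (t + 1)) := by positivity
  linarith

theorem le_decay_bound_of_step_le {p γ E : ℝ} (hp : 1 < p) (hγ : 0 < γ + 1)
    (hE : 0 ≤ E) (x : ℕ → ℝ) (hx₁ : 0 ≤ x 1) (hcontr : ∀ k : ℕ, 1 ≤ k → p / (γ + k) ≤ 1)
    (hstep : ∀ k : ℕ, 1 ≤ k → x (k + 1) ≤ (1 - p / (γ + k)) * x k + E / (2 * (γ + k) ^ 2)) :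
    ∀ k : ℕ, 1 ≤ k → x k ≤ x 1 * ((γ + 1) ^ p / (γ + k) ^ p) + E / ((γ + k) * (p - 1)) := by
  intro k hk
  induction k, hk using Nat.le_induction with
  | base =>
    have hC : 0 < (γ + 1) ^ p := rpow_pos_of_pos hγ p
    have : 0 ≤ E / ((γ + 1) * (p - 1)) := div_nonneg hE (mul_nonneg hγ.le (by linarith))
    push_cast
    rw [div_self hC.ne']
    linarith
  | succ k hk ih =>
    set t : ℝ := γ + k
    have ht : 0 < t := by
      have : (1 : ℝ) ≤ k := by exact_mod_cast hk
      linarith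
    have hcoef : 0 ≤ 1 - p / t := sub_nonneg.mpr (hcontr k hk)
    have hfirst := mul_le_mul_of_nonneg_left
      (one_sub_div_mul_div_rpow_le ht hp.le (rpow_pos_of_pos hγ p).le) hx₁
    have hsecond := one_sub_div_mul_div_add_le ht hp hE
    have ht1 : γ + ((k + 1 : ℕ) : ℝ) = t + 1 := by push_cast; ring
    rw [ht1]
    calc x (k + 1) ≤ (1 - p / t) * x k + E / (2 * t ^ 2) := hstep k hk
      _ ≤ (1 - p / t) * (x 1 * ((γ + 1) ^ p / t ^ p) + E / (t * (p - 1))) + E / (2 * t ^ 2) := by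
          gcongr
      _ = x 1 * ((1 - p / t) * ((γ + 1) ^ p / t ^ p))
          + ((1 - p / t) * (E / (t * (p - 1))) + E / (2 * t ^ 2)) := by ring
      _ ≤ x 1 * ((γ + 1) ^ p / (t + 1) ^ p) + E / ((t + 1) * (p - 1)) := by linarith

/-- Real-sequence induction underlying Theorem 1: if `a_k = β/(γ+k)`,
`β > 1/c`, `γ > 0`, `c·a_k ≤ 1`, and `x_{k+1} ≤ (1 - c a_k)x_k + (D/2)a_k²` for a
nonnegative sequence, then `x_k ≤ x_1 (γ+1)^{βc}/(γ+k)^{βc} + β²D/((γ+k)(βc-1))`. -/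
theorem bdmc_stmt12 (c D β γ : ℝ) (hc : 0 < c) (hD : 0 ≤ D) (hβ : 1 / c < β) (hγ : 0 < γ)
    (x : ℕ → ℝ) (hx : ∀ k, 0 ≤ x k)
    (hca : ∀ k ≥ 1, c * (β / (γ + (k : ℝ))) ≤ 1)
    (hstep : ∀ k ≥ 1, x (k + 1) ≤ (1 - c * (β / (γ + (k : ℝ)))) * x k
        + (D / 2) * (β / (γ + (k : ℝ))) ^ 2) :
    ∀ k ≥ 1, x k ≤ x 1 * ((γ + 1) ^ (β * c) / (γ + (k : ℝ)) ^ (β * c))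
        + β ^ 2 * D / ((γ + (k : ℝ)) * (β * c - 1)) := by
  have hp : 1 < β * c := by linarith [(div_lt_iff₀ hc).mp hβ]
  have hrate (t : ℝ) : c * (β / t) = β * c / t := by ring
  have hnoise (t : ℝ) : D / 2 * (β / t) ^ 2 = β ^ 2 * D / (2 * t ^ 2) := by ring
  refine le_decay_bound_of_step_le hp (by linarith) (by positivity) x (hx 1)
    (fun k hk => ?_) (fun k hk => ?_)
  · rw [← hrate]
    exact hca k (by exact_mod_cast hk)
  · rw [← hrate, ← hnoise]
    exact hstep k hk
end

section
/- With stepsizes α_j = β/(j+1), 0 < β ≤ 1/L, and M Hermitian positive definite with eigenvalues in [τ, L], the gradient descent error satisfies ‖δ_{k+1}‖ ≤ exp(−βτ(H_{k+1} − 1))‖δ_1‖ where H_{k+1} = Σ_{j=1}^{k+1} 1/j is the harmonic number; in particular ‖δ_k‖ = O(k^{−βτ}) as k → ∞. -/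
open Matrix
open scoped ComplexOrder

/-!
In an orthonormal eigenbasis of `M` one step multiplies the error by `I - α_k M`, whose
eigenvalues `1 - α_k λ` lie in `[0, 1 - α_k τ]` because `α_k ≤ β ≤ 1/L`; hence the error
contracts by `1 - α_k τ ≤ exp (-α_k τ)`. Since `α_k = β (H_{k+1} - H_k)`, the product of
these factors telescopes to `exp (-β τ (H_{k+1} - 1))`, and `log k ≤ H_k` turns this into
`e^{β τ} k^{-β τ}`.
-/

section Spectral

variable {𝕜 : Type*} [RCLike 𝕜]

theorem OrthonormalBasis.norm_apply_le_of_apply_eq_smul {ι E : Type*} [Fintype ι]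
    [NormedAddCommGroup E] [InnerProductSpace 𝕜 E] (b : OrthonormalBasis ι 𝕜 E)
    {T : E →ₗ[𝕜] E} {μ : ι → 𝕜} (hT : ∀ i, T (b i) = μ i • b i) {r : ℝ} (hr0 : 0 ≤ r)
    (hr : ∀ i, ‖μ i‖ ≤ r) (v : E) : ‖T v‖ ≤ r * ‖v‖ := by
  have hTv : T v = b.repr.symm (WithLp.toLp 2 fun i => μ i * b.repr v i) := by
    conv_lhs => rw [← b.sum_repr v]
    simp only [← b.sum_repr_symm, map_sum, map_smul, hT, smul_smul, mul_comm]
  have hsq : ‖T v‖ ^ 2 ≤ (r * ‖v‖) ^ 2 := by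
    rw [hTv, LinearIsometryEquiv.norm_map, ← b.repr.norm_map v, mul_pow,
      EuclideanSpace.norm_sq_eq, EuclideanSpace.norm_sq_eq, Finset.mul_sum]
    gcongr with i
    rw [norm_mul, mul_pow]
    gcongr
    exact hr i
  exact le_of_sq_le_sq hsq (by positivity)

theorem Matrix.IsHermitian.norm_toLp_sub_smul_mulVec_le {n : Type*} [Fintype n] [DecidableEq n]
    {A : Matrix n n 𝕜} (hA : A.IsHermitian) {c r : ℝ} (hr0 : 0 ≤ r)
    (hr : ∀ i, |1 - c * hA.eigenvalues i| ≤ r) (x : n → 𝕜) :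
    ‖WithLp.toLp 2 (x - (c : 𝕜) • (A *ᵥ x))‖ ≤ r * ‖WithLp.toLp 2 x‖ := by
  let T : EuclideanSpace 𝕜 n →ₗ[𝕜] EuclideanSpace 𝕜 n :=
    LinearMap.id - (c : 𝕜) • toEuclideanLin A
  have hT : ∀ i, T (hA.eigenvectorBasis i) =
      ((1 - c * hA.eigenvalues i : ℝ) : 𝕜) • hA.eigenvectorBasis i := by
    intro i
    ext j
    simp [T, toLpLin_apply, hA.mulVec_eigenvectorBasis, sub_mul, mul_assoc,
      RCLike.real_smul_eq_coe_mul]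
  simpa [T, toLpLin_apply] using hA.eigenvectorBasis.norm_apply_le_of_apply_eq_smul hT hr0
    (fun i => by rw [RCLike.norm_ofReal]; exact hr i) (WithLp.toLp 2 x)

theorem abs_one_sub_mul_le_exp_neg_mul {c τ L x : ℝ} (hc : 0 ≤ c) (hcL : c * L ≤ 1)
    (hτx : τ ≤ x) (hxL : x ≤ L) : |1 - c * x| ≤ Real.exp (-(c * τ)) := by
  have hcx : c * x ≤ 1 := (mul_le_mul_of_nonneg_left hxL hc).trans hcL
  rw [abs_of_nonneg (sub_nonneg.mpr hcx)]
  calc 1 - c * x ≤ -(c * τ) + 1 := by nlinarith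
    _ ≤ Real.exp (-(c * τ)) := Real.add_one_le_exp _

theorem Matrix.sub_smul_mulVec_sub_sub_of_mulVec_eq {R n : Type*} [Fintype n] [CommRing R]
    {M : Matrix n n R} {b y : n → R} (hy : M *ᵥ y = b) (c : R) (x : n → R) :
    x - c • (M *ᵥ x - b) - y = x - y - c • (M *ᵥ (x - y)) := by
  rw [mulVec_sub, hy]
  abel

theorem Matrix.IsHermitian.norm_toLp_gradient_step_sub_le {n : Type*} [Fintype n] [DecidableEq n]
    {A : Matrix n n 𝕜} (hA : A.IsHermitian) {τ L c : ℝ}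
    (hev : ∀ i, τ ≤ hA.eigenvalues i ∧ hA.eigenvalues i ≤ L) (hc : 0 ≤ c) (hcL : c * L ≤ 1)
    {b y : n → 𝕜} (hy : A *ᵥ y = b) (x : n → 𝕜) :
    ‖WithLp.toLp 2 (x - (c : 𝕜) • (A *ᵥ x - b) - y)‖ ≤
      Real.exp (-(c * τ)) * ‖WithLp.toLp 2 (x - y)‖ := by
  rw [sub_smul_mulVec_sub_sub_of_mulVec_eq hy]
  exact hA.norm_toLp_sub_smul_mulVec_le (Real.exp_pos _).le
    (fun i => abs_one_sub_mul_le_exp_neg_mul hc hcL (hev i).1 (hev i).2) _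

end Spectral

theorem le_exp_sub_mul_of_succ_le {e s : ℕ → ℝ} {m : ℕ}
    (h : ∀ k ≥ m, e (k + 1) ≤ Real.exp (s k - s (k + 1)) * e k) :
    ∀ k ≥ m, e k ≤ Real.exp (s m - s k) * e m := by
  intro k hk
  induction k, hk using Nat.le_induction with
  | base => simp
  | succ k hk ih =>
    calc e (k + 1) ≤ Real.exp (s k - s (k + 1)) * e k := h k hk
      _ ≤ Real.exp (s k - s (k + 1)) * (Real.exp (s m - s k) * e m) := by gcongr
      _ = Real.exp (s m - s (k + 1)) * e m := by
        rw [← mul_assoc, ← Real.exp_add]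
        ring_nf

theorem harmonic_cast_eq_sum_Icc (n : ℕ) :
    (harmonic n : ℝ) = ∑ j ∈ Finset.Icc 1 n, (1 : ℝ) / (j : ℝ) := by
  simp [harmonic_eq_sum_Icc]

theorem exp_sub_mul_harmonic_le {a : ℝ} (ha : 0 ≤ a) {k : ℕ} (hk : 1 ≤ k) :
    Real.exp (a - a * harmonic k) ≤ Real.exp a * (k : ℝ) ^ (-a) := by
  have hlog : Real.log k ≤ harmonic k := by
    simpa using log_le_harmonic_floor (k : ℝ) k.cast_nonneg
  rw [Real.rpow_def_of_pos (by exact_mod_cast hk), ← Real.exp_add]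
  gcongr
  nlinarith

theorem bdmc_stmt17_general (n : ℕ) (M : Matrix (Fin n) (Fin n) ℂ) (hM : M.PosDef)
    (τ L β : ℝ) (hτ : 0 < τ) (hβ : 0 < β) (hβL : β ≤ 1 / L)
    (hev : ∀ i, τ ≤ hM.1.eigenvalues i ∧ hM.1.eigenvalues i ≤ L)
    (b : Fin n → ℂ) (f : ℕ → Fin n → ℂ)
    (hiter : ∀ k ≥ 1,
      f (k + 1) = f k - (((β / ((k : ℝ) + 1)) : ℝ) : ℂ) • (M *ᵥ f k - b)) :
    (∀ k ≥ 1,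
      ‖(EuclideanSpace.equiv (Fin n) ℂ).symm (f (k + 1) - M⁻¹ *ᵥ b)‖ ≤
        Real.exp (-(β * τ * ((∑ j ∈ Finset.Icc 1 (k + 1), (1 : ℝ) / (j : ℝ)) - 1))) *
          ‖(EuclideanSpace.equiv (Fin n) ℂ).symm (f 1 - M⁻¹ *ᵥ b)‖) ∧
    (∃ C : ℝ, ∀ k ≥ 1,
      ‖(EuclideanSpace.equiv (Fin n) ℂ).symm (f k - M⁻¹ *ᵥ b)‖ ≤ C * (k : ℝ) ^ (-(β * τ))) := by
  simp only [PiLp.coe_symm_continuousLinearEquiv]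
  have hL : 0 < L := one_div_pos.mp (hβ.trans_le hβL)
  have hsol : M *ᵥ (M⁻¹ *ᵥ b) = b := by
    rw [mulVec_mulVec, mul_nonsing_inv M ((isUnit_iff_isUnit_det M).mp hM.isUnit), one_mulVec]
  have hstep : ∀ k ≥ 1, ‖WithLp.toLp 2 (f (k + 1) - M⁻¹ *ᵥ b)‖ ≤
      Real.exp (β * τ * harmonic k - β * τ * harmonic (k + 1)) *
        ‖WithLp.toLp 2 (f k - M⁻¹ *ᵥ b)‖ := by
    intro k hk
    have hcL : β / ((k : ℝ) + 1) * L ≤ 1 :=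
      (mul_le_mul_of_nonneg_right (div_le_self hβ.le (by linarith)) hL.le).trans
        ((le_div_iff₀ hL).mp hβL)
    have hexp : β * τ * harmonic k - β * τ * harmonic (k + 1) = -(β / ((k : ℝ) + 1) * τ) := by
      rw [harmonic_succ]; push_cast; ring
    rw [hiter k hk, hexp]
    exact hM.1.norm_toLp_gradient_step_sub_le hev (by positivity) hcL hsol _
  have hdecay := le_exp_sub_mul_of_succ_le (e := fun k => ‖WithLp.toLp 2 (f k - M⁻¹ *ᵥ b)‖)
    (s := fun k => β * τ * harmonic k) hstep
  have hH1 : (harmonic 1 : ℝ) = 1 := by simp [harmonic]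
  simp only [hH1, mul_one] at hdecay
  refine ⟨fun k hk => ?_, ⟨Real.exp (β * τ) * ‖WithLp.toLp 2 (f 1 - M⁻¹ *ᵥ b)‖, fun k hk => ?_⟩⟩
  · convert hdecay (k + 1) (by omega) using 3
    rw [← harmonic_cast_eq_sum_Icc]
    ring
  · calc _ ≤ Real.exp (β * τ - β * τ * harmonic k) * ‖WithLp.toLp 2 (f 1 - M⁻¹ *ᵥ b)‖ :=
          hdecay k hk
      _ ≤ Real.exp (β * τ) * (k : ℝ) ^ (-(β * τ)) * ‖WithLp.toLp 2 (f 1 - M⁻¹ *ᵥ b)‖ := by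
          gcongr
          exact exp_sub_mul_harmonic_le (by positivity) hk
      _ = _ := by ring

/-- STATEMENT 17: With stepsizes `α_j = β/(j+1)`, `0 < β ≤ 1/L`, the gradient descent error
satisfies `‖δ_{k+1}‖ ≤ exp(-βτ(H_{k+1} - 1))‖δ_1‖` where `H_{k+1}` is the harmonic number;
in particular `‖δ_k‖ = O(k^{-βτ})`. -/
theorem bdmc_stmt17 (n : ℕ) (M : Matrix (Fin n) (Fin n) ℂ) (hM : M.PosDef)
    (τ L β : ℝ) (hτ : 0 < τ) (hτL : τ ≤ L) (hβ : 0 < β) (hβL : β ≤ 1 / L)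
    (hev : ∀ i, τ ≤ hM.1.eigenvalues i ∧ hM.1.eigenvalues i ≤ L)
    (b : Fin n → ℂ) (f : ℕ → Fin n → ℂ)
    (hiter : ∀ k ≥ 1,
      f (k + 1) = f k - (((β / ((k : ℝ) + 1)) : ℝ) : ℂ) • (M *ᵥ f k - b)) :
    (∀ k ≥ 1,
      ‖(EuclideanSpace.equiv (Fin n) ℂ).symm (f (k + 1) - M⁻¹ *ᵥ b)‖ ≤
        Real.exp (-(β * τ * ((∑ j ∈ Finset.Icc 1 (k + 1), (1 : ℝ) / (j : ℝ)) - 1))) *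
          ‖(EuclideanSpace.equiv (Fin n) ℂ).symm (f 1 - M⁻¹ *ᵥ b)‖) ∧
    (∃ C : ℝ, ∀ k ≥ 1,
      ‖(EuclideanSpace.equiv (Fin n) ℂ).symm (f k - M⁻¹ *ᵥ b)‖ ≤ C * (k : ℝ) ^ (-(β * τ))) :=
  bdmc_stmt17_general n M hM τ L β hτ hβ hβL hev b f hiter
end
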